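/- arXiv:2002.11199 — 4 statements merged into one kernel-verified Lean document; each statement's English description precedes it below -/
import Mathlib

section
/- Let (X,f) be a dynamical system on a compact metric space with f surjective. Then f has shadowing if and only if f has two-sided shadowing. -/
open Filter Topology Function

variable {X : Type*} [MetricSpace X]

/-- A (forward) `δ`-pseudo-orbit. -/
def PseudoOrbit (f : X → X) (δ : ℝ) (x : ℕ → X) : Prop :=
  ∀ i, dist (f (x i)) (x (i + 1)) < δ

/-- The orbit of `z` `ε`-shadows the sequence `x`. -/
def ShadowsFrom (f : X → X) (ε : ℝ) (z : X) (x : ℕ → X) : Prop :=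
  ∀ i, dist (f^[i] z) (x i) < ε

/-- Classical shadowing. -/
def HasShadowing (f : X → X) : Prop :=
  ∀ ε > 0, ∃ δ > 0, ∀ x : ℕ → X, PseudoOrbit f δ x → ∃ z, ShadowsFrom f ε z x

/-- A full (two-sided) orbit. -/
def FullOrbit (f : X → X) (z : ℤ → X) : Prop := ∀ i : ℤ, f (z i) = z (i + 1)

/-- A two-sided `δ`-pseudo-orbit. -/
def TwoSidedPseudoOrbit (f : X → X) (δ : ℝ) (x : ℤ → X) : Prop :=
  ∀ i : ℤ, dist (f (x i)) (x (i + 1)) < δ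

/-- Two-sided shadowing. -/
def HasTwoSidedShadowing (f : X → X) : Prop :=
  ∀ ε > 0, ∃ δ > 0, ∀ x : ℤ → X, TwoSidedPseudoOrbit f δ x →
    ∃ z : ℤ → X, FullOrbit f z ∧ ∀ i, dist (z i) (x i) < ε

/-- A backwards `δ`-pseudo-orbit (indexed by nonpositive integers). -/
def BackwardPseudoOrbit (f : X → X) (δ : ℝ) (x : ℤ → X) : Prop :=
  ∀ i < (0 : ℤ), dist (f (x i)) (x (i + 1)) < δ

/-- A backwards orbit. -/
def BackwardOrbit (f : X → X) (z : ℤ → X) : Prop := ∀ i < (0 : ℤ), f (z i) = z (i + 1)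

/-- Backwards shadowing. -/
def HasBackwardShadowing (f : X → X) : Prop :=
  ∀ ε > 0, ∃ δ > 0, ∀ x : ℤ → X, BackwardPseudoOrbit f δ x →
    ∃ z : ℤ → X, BackwardOrbit f z ∧ ∀ i ≤ (0 : ℤ), dist (z i) (x i) < ε

/-- An asymptotic pseudo-orbit. -/
def AsymptoticPseudoOrbit (f : X → X) (x : ℕ → X) : Prop :=
  Tendsto (fun i => dist (f (x i)) (x (i + 1))) atTop (nhds 0)

/-- s-limit shadowing. -/
def HasSLimitShadowing (f : X → X) : Prop :=
  HasShadowing f ∧ ∀ ε > 0, ∃ δ > 0, ∀ x : ℕ → X,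
    PseudoOrbit f δ x → AsymptoticPseudoOrbit f x →
    ∃ z, ShadowsFrom f ε z x ∧ Tendsto (fun i => dist (f^[i] z) (x i)) atTop (nhds 0)

/-- Two-sided asymptotic pseudo-orbit condition. -/
def TwoSidedAsymptotic (f : X → X) (x : ℤ → X) : Prop :=
  Tendsto (fun i => dist (f (x i)) (x (i + 1))) atTop (nhds 0) ∧
  Tendsto (fun i => dist (f (x i)) (x (i + 1))) atBot (nhds 0)

/-- The L-shadowing condition: two-sided asymptotic pseudo-orbits are
asymptotically shadowed by full orbits. -/
def HasLShadowing (f : X → X) : Prop :=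
  ∀ ε > 0, ∃ δ > 0, ∀ x : ℤ → X,
    TwoSidedPseudoOrbit f δ x → TwoSidedAsymptotic f x →
    ∃ z : ℤ → X, FullOrbit f z ∧ (∀ i, dist (z i) (x i) < ε) ∧
      Tendsto (fun i => dist (z i) (x i)) atTop (nhds 0) ∧
      Tendsto (fun i => dist (z i) (x i)) atBot (nhds 0)

/-- Two-sided s-limit shadowing. -/
def HasTwoSidedSLimitShadowing (f : X → X) : Prop :=
  HasTwoSidedShadowing f ∧ HasLShadowing f

/-- Backwards asymptotic pseudo-orbit condition. -/
def BackwardAsymptotic (f : X → X) (x : ℤ → X) : Prop :=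
  Tendsto (fun i => dist (f (x i)) (x (i + 1))) atBot (nhds 0)

/-- Backwards s-limit shadowing. -/
def HasBackwardSLimitShadowing (f : X → X) : Prop :=
  HasBackwardShadowing f ∧ ∀ ε > 0, ∃ δ > 0, ∀ x : ℤ → X,
    BackwardPseudoOrbit f δ x → BackwardAsymptotic f x →
    ∃ z : ℤ → X, BackwardOrbit f z ∧ (∀ i ≤ (0 : ℤ), dist (z i) (x i) < ε) ∧
      Tendsto (fun i => dist (z i) (x i)) atBot (nhds 0)

/-- A set has at most `n` points. -/
def AtMostCard (S : Set X) (n : ℕ) : Prop := ∃ F : Finset X, F.card ≤ n ∧ S ⊆ ↑F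

/-- Positively `n`-expansive. -/
def PosNExpansive (f : X → X) (n : ℕ) : Prop :=
  ∃ r > 0, ∀ x : X, AtMostCard {y | ∀ k : ℕ, dist (f^[k] x) (f^[k] y) < r} n

/-- `n`-expansive (two-sided). -/
def NExpansive (f : X → X) (n : ℕ) : Prop :=
  ∃ r > 0, ∀ x : ℤ → X, FullOrbit f x →
    AtMostCard {y0 | ∃ y : ℤ → X, FullOrbit f y ∧ y 0 = y0 ∧ ∀ i, dist (x i) (y i) < r} n

/-- `n`-shadowing. -/
def HasNShadowing (f : X → X) (n : ℕ) : Prop :=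
  ∃ η > 0, ∀ ε, 0 < ε → ε < η → ∃ δ > 0, ∀ x : ℕ → X, PseudoOrbit f δ x →
    (∃ z, ShadowsFrom f ε z x) ∧ AtMostCard {z | ShadowsFrom f ε z x} n

/-- Two-sided `n`-shadowing. -/
def HasTwoSidedNShadowing (f : X → X) (n : ℕ) : Prop :=
  ∃ η > 0, ∀ ε, 0 < ε → ε < η → ∃ δ > 0, ∀ x : ℤ → X, TwoSidedPseudoOrbit f δ x →
    (∃ z : ℤ → X, FullOrbit f z ∧ ∀ i, dist (z i) (x i) < ε) ∧
    AtMostCard {z0 | ∃ z : ℤ → X, FullOrbit f z ∧ z 0 = z0 ∧ ∀ i, dist (z i) (x i) < ε} n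

/-- h-shadowing. -/
def HasHShadowing (f : X → X) : Prop :=
  ∀ ε > 0, ∃ δ > 0, ∀ (m : ℕ) (x : ℕ → X),
    (∀ i < m, dist (f (x i)) (x (i + 1)) < δ) →
    ∃ z, (∀ i ≤ m, dist (f^[i] z) (x i) < ε) ∧ f^[m] z = x m

/-- Unique shadowing (`1`-shadowing). -/
def HasUniqueShadowing (f : X → X) : Prop :=
  ∃ η > 0, ∀ ε, 0 < ε → ε < η → ∃ δ > 0, ∀ x : ℕ → X, PseudoOrbit f δ x →
    ∃! z, ShadowsFrom f ε z x

/-- Unique s-limit shadowing. -/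
def HasUniqueSLimitShadowing (f : X → X) : Prop :=
  HasUniqueShadowing f ∧ ∃ η > 0, ∀ ε, 0 < ε → ε < η → ∃ δ > 0, ∀ x : ℕ → X,
    PseudoOrbit f δ x → AsymptoticPseudoOrbit f x →
    ∃! z, ShadowsFrom f ε z x ∧ Tendsto (fun i => dist (f^[i] z) (x i)) atTop (nhds 0)

/-- Unique h-shadowing. -/
def HasUniqueHShadowing (f : X → X) : Prop :=
  ∃ η > 0, ∀ ε, 0 < ε → ε < η → ∃ δ > 0, ∀ (m : ℕ) (x : ℕ → X),
    (∀ i < m, dist (f (x i)) (x (i + 1)) < δ) →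
    ∃! z, (∀ i ≤ m, dist (f^[i] z) (x i) < ε) ∧ f^[m] z = x m

/-- Limit shadowing. -/
def HasLimitShadowing (f : X → X) : Prop :=
  ∀ x : ℕ → X, AsymptoticPseudoOrbit f x →
    ∃ z, Tendsto (fun i => dist (f^[i] z) (x i)) atTop (nhds 0)

/-- Unique limit shadowing. -/
def HasUniqueLimitShadowing (f : X → X) : Prop :=
  ∀ x : ℕ → X, AsymptoticPseudoOrbit f x →
    ∃! z, Tendsto (fun i => dist (f^[i] z) (x i)) atTop (nhds 0)

/-- c-expansivity. -/
def CExpansive (f : X → X) : Prop :=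
  ∃ η > 0, ∀ x y : ℤ → X, FullOrbit f x → FullOrbit f y →
    (∀ i, dist (x i) (y i) < η) → x 0 = y 0

/-- Positive expansivity. -/
def PosExpansive (f : X → X) : Prop :=
  ∃ r > 0, ∀ x : X, {y | ∀ k : ℕ, dist (f^[k] x) (f^[k] y) < r} = {x}

/-- Topological mixing. -/
def Mixing (f : X → X) : Prop :=
  ∀ U V : Set X, IsOpen U → IsOpen V → U.Nonempty → V.Nonempty →
    ∃ N, ∀ n ≥ N, (f^[n] '' U ∩ V).Nonempty


/-!
Given a two-sided pseudo-orbit `x`, forward shadowing provides, for every `n`, an orbit that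
shadows `x` from time `-n` on. A cluster point of these partial orbits in the compact space
`ℤ → X` is a full orbit shadowing `x`, since continuity of `f` makes both the orbit relation and
the distance bound closed conditions. Conversely, surjectivity of `f` lets one prepend to a forward
pseudo-orbit an exact backward orbit of its initial point; a full orbit shadowing the resulting
two-sided pseudo-orbit shadows the original one from time `0`.
-/

theorem exists_forall_mem_of_eventually_mem {α ι Y : Type*} [TopologicalSpace Y] [CompactSpace Y]
    {l : Filter α} [l.NeBot] {w : α → Y} {C : ι → Set Y} (hC : ∀ i, IsClosed (C i))
    (hw : ∀ i, ∀ᶠ a in l, w a ∈ C i) : ∃ y, ∀ i, y ∈ C i := by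
  obtain ⟨y, hy⟩ := exists_clusterPt_of_compactSpace (map w l)
  exact ⟨y, fun i => (hC i).mem_of_mapClusterPt hy (hw i)⟩

theorem FullOrbit.iterate_apply {α : Type*} {f : α → α} {z : ℤ → α} (hz : FullOrbit f z)
    (i : ℤ) (n : ℕ) : f^[n] (z i) = z (i + n) := by
  induction n with
  | zero => simp
  | succ n ih => rw [iterate_succ_apply', ih, hz, Nat.cast_succ, add_assoc]

theorem TwoSidedPseudoOrbit.comp_sub {f : X → X} {δ : ℝ} {x : ℤ → X}
    (hx : TwoSidedPseudoOrbit f δ x) (m : ℤ) : PseudoOrbit f δ (fun j : ℕ => x (j - m)) := by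
  intro j
  simpa [sub_add_eq_add_sub] using hx (j - m)

theorem exists_fullOrbit_of_forall_shadowsFrom [CompactSpace X] {f : X → X} (hf : Continuous f)
    {ε : ℝ} {x : ℤ → X} (h : ∀ n : ℕ, ∃ z, ShadowsFrom f ε z (fun j : ℕ => x (j - n))) :
    ∃ z : ℤ → X, FullOrbit f z ∧ ∀ i, dist (z i) (x i) ≤ ε := by
  choose z hz using h
  -- `w n` is the orbit of `z n` started at time `-n` (and constant before that time).
  let w (n : ℕ) (i : ℤ) : X := f^[(i + n).toNat] (z n)
  let C (i : ℤ) : Set (ℤ → X) := {y | f (y i) = y (i + 1) ∧ dist (y i) (x i) ≤ ε}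
  have hC (i : ℤ) : IsClosed (C i) :=
    (isClosed_eq (hf.comp (continuous_apply i)) (continuous_apply _)).inter
      (isClosed_le ((continuous_apply i).dist continuous_const) continuous_const)
  have hw (i : ℤ) : ∀ᶠ n in atTop, w n ∈ C i := by
    filter_upwards [eventually_ge_atTop (-i).toNat] with n hn
    obtain ⟨k, hk⟩ : ∃ k : ℕ, i + n = k := ⟨(i + n).toNat, by omega⟩
    have hk' : i + 1 + n = ((k + 1 : ℕ) : ℤ) := by push_cast; omega
    refine ⟨?_, ?_⟩
    · simp only [w, hk, hk', Int.toNat_natCast, iterate_succ_apply']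
    · simpa [w, hk, show (k : ℤ) - n = i by omega] using (hz n k).le
  obtain ⟨y, hy⟩ := exists_forall_mem_of_eventually_mem hC hw
  exact ⟨y, fun i => (hy i).1, fun i => (hy i).2⟩

theorem HasShadowing.hasTwoSidedShadowing [CompactSpace X] {f : X → X} (hs : HasShadowing f)
    (hf : Continuous f) : HasTwoSidedShadowing f := by
  intro ε hε
  obtain ⟨δ, hδ, hδs⟩ := hs (ε / 2) (half_pos hε)
  refine ⟨δ, hδ, fun x hx => ?_⟩
  obtain ⟨z, hz, hzx⟩ := exists_fullOrbit_of_forall_shadowsFrom hf fun n => hδs _ (hx.comp_sub n)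
  exact ⟨z, hz, fun i => (hzx i).trans_lt (half_lt_self hε)⟩

theorem Function.Surjective.iterate_surjInv_succ {α : Type*} {f : α → α} (hf : Surjective f)
    (n : ℕ) (a : α) : f ((surjInv hf)^[n + 1] a) = (surjInv hf)^[n] a := by
  rw [iterate_succ_apply', surjInv_eq hf]

def extendBackward {α : Type*} (g : α → α) (x : ℕ → α) : ℤ → α
  | (n : ℕ) => x n
  | Int.negSucc n => g^[n + 1] (x 0)

@[simp]
theorem extendBackward_natCast {α : Type*} (g : α → α) (x : ℕ → α) (n : ℕ) :
    extendBackward g x n = x n :=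
  rfl

theorem PseudoOrbit.twoSidedPseudoOrbit_extendBackward {f : X → X} (hf : Surjective f) {δ : ℝ}
    (hδ : 0 < δ) {x : ℕ → X} (hx : PseudoOrbit f δ x) :
    TwoSidedPseudoOrbit f δ (extendBackward (surjInv hf) x) := by
  rintro (n | _ | n)
  · exact hx n
  · show dist (f ((surjInv hf)^[0 + 1] (x 0))) (x 0) < δ
    rwa [hf.iterate_surjInv_succ, iterate_zero_apply, dist_self]
  · show dist (f ((surjInv hf)^[n + 1 + 1] (x 0))) ((surjInv hf)^[n + 1] (x 0)) < δ
    rwa [hf.iterate_surjInv_succ, dist_self]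

theorem HasTwoSidedShadowing.hasShadowing {f : X → X} (hs : HasTwoSidedShadowing f)
    (hf : Surjective f) : HasShadowing f := by
  intro ε hε
  obtain ⟨δ, hδ, hδs⟩ := hs ε hε
  refine ⟨δ, hδ, fun x hx => ?_⟩
  obtain ⟨z, hz, hzx⟩ := hδs _ (hx.twoSidedPseudoOrbit_extendBackward hf hδ)
  refine ⟨z 0, fun i => ?_⟩
  simpa [hz.iterate_apply] using hzx i

theorem shadowing_iff_twoSidedShadowing
    {X : Type*} [MetricSpace X] [CompactSpace X] (f : X → X) (hf : Continuous f)
    (hsurj : Function.Surjective f) : HasShadowing f ↔ HasTwoSidedShadowing f :=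
  ⟨fun hs => hs.hasTwoSidedShadowing hf, fun hs => hs.hasShadowing hsurj⟩
end

section
/- There exists a compact metric dynamical system (X,f) with f not surjective that has two-sided s-limit shadowing and backwards s-limit shadowing but does not have s-limit shadowing. Concretely, X = {−1, −1/2, 0} ∪ {1/2^n : n≥0} ⊂ ℝ with f(−1)=−1/2, f(−1/2)=0, f(0)=0, f(1)=1, f(1/2^n)=1/2^{n−1} for n≥1 is such a system. -/
/-!
For small `δ`, a two-sided `δ`-pseudo-orbit never visits `-1` or `-1/2`, so it lives in
`{0} ∪ {(1/2)^n}`, where the map doubles near `0` and every point but `0` is isolated. Hence once a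
pseudo-orbit reaches `2δ` it is a true orbit, and before that it stays near `0`: it is shadowed by
the fixed point `0`, by itself, or by the orbit that follows it from its first point above `2δ` on
and runs back through the dyadic points before. Because the map doubles near `0`, an asymptotic pseudo-orbit that stays near `0` converges to
`0`, which gives the asymptotic estimates. Backward pseudo-orbits are continued by a true forward
orbit and shadowed as two-sided ones. Shadowing fails at the isolated point `-1`: its orbit ends at
the fixed point `0`, from where a pseudo-orbit can jump to `(1/2)^n` and climb up to `1`.
-/

open Filter Topology Function

variable {X : Type*} [MetricSpace X]

noncomputable abbrev ExampleSpace : Type :=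
  ↥(({-1, -1/2, 0} : Set ℝ) ∪ {x : ℝ | ∃ n : ℕ, x = (1/2) ^ n})


section General

variable {f : X → X}

lemma pseudoOrbit_ite_iterate {δ : ℝ} (hδ : 0 < δ) {a b : X} {k : ℕ}
    (hab : dist (f^[k] a) b < δ) :
    PseudoOrbit f δ (fun i => if i < k then f^[i] a else f^[i - k] b) := by
  intro i
  rcases lt_trichotomy (i + 1) k with h | h | h
  · simpa [h, show i < k by omega, ← iterate_succ_apply' f i a] using hδ
  · simpa [show i < k by omega, ← iterate_succ_apply' f i a, h] using hab
  · simpa [show ¬ i < k by omega, show ¬ i + 1 < k by omega, show i + 1 - k = i - k + 1 by omega,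
      ← iterate_succ_apply'] using hδ

/-- Continues a sequence on the nonpositive integers by the forward orbit of its value at `0`. -/
def forwardExtension {α : Type*} (g : α → α) (x : ℤ → α) : ℤ → α :=
  fun i => g^[i.toNat] (x (min i 0))

lemma forwardExtension_of_nonpos {α : Type*} {g : α → α} {x : ℤ → α} {i : ℤ} (hi : i ≤ 0) :
    forwardExtension g x i = x i := by
  simp [forwardExtension, Int.toNat_of_nonpos hi, min_eq_left hi]

lemma apply_forwardExtension_of_nonneg {α : Type*} {g : α → α} {x : ℤ → α} {i : ℤ} (hi : 0 ≤ i) :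
    g (forwardExtension g x i) = forwardExtension g x (i + 1) := by
  simp only [forwardExtension, min_eq_right hi, min_eq_right (by omega : (0 : ℤ) ≤ i + 1),
    show (i + 1).toNat = i.toNat + 1 by omega, iterate_succ_apply']

variable {x : ℤ → X}

lemma BackwardPseudoOrbit.twoSidedPseudoOrbit_forwardExtension {δ : ℝ}
    (hx : BackwardPseudoOrbit f δ x) (hδ : 0 < δ) :
    TwoSidedPseudoOrbit f δ (forwardExtension f x) := by
  intro i
  rcases lt_or_ge i 0 with hi | hi
  · rw [forwardExtension_of_nonpos hi.le, forwardExtension_of_nonpos (by omega)]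
    exact hx i hi
  · rwa [apply_forwardExtension_of_nonneg (g := f) hi, dist_self]

lemma BackwardAsymptotic.twoSidedAsymptotic_forwardExtension (hx : BackwardAsymptotic f x) :
    TwoSidedAsymptotic f (forwardExtension f x) := by
  constructor
  · refine tendsto_const_nhds.congr' ?_
    filter_upwards [eventually_ge_atTop 0] with i hi
    rw [apply_forwardExtension_of_nonneg (g := f) hi, dist_self]
  · refine hx.congr' ?_
    filter_upwards [eventually_le_atBot (-1)] with i hi
    rw [forwardExtension_of_nonpos (by omega), forwardExtension_of_nonpos (by omega)]

lemma HasTwoSidedShadowing.hasBackwardShadowing (h : HasTwoSidedShadowing f) :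
    HasBackwardShadowing f := by
  intro ε hε
  obtain ⟨δ, hδ, hshadow⟩ := h ε hε
  refine ⟨δ, hδ, fun x hx => ?_⟩
  obtain ⟨z, hz, hdist⟩ := hshadow _ (hx.twoSidedPseudoOrbit_forwardExtension hδ)
  exact ⟨z, fun i _ => hz i, fun i hi => by
    simpa only [forwardExtension_of_nonpos hi] using hdist i⟩

lemma HasTwoSidedSLimitShadowing.hasBackwardSLimitShadowing (h : HasTwoSidedSLimitShadowing f) :
    HasBackwardSLimitShadowing f := by
  refine ⟨h.1.hasBackwardShadowing, fun ε hε => ?_⟩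
  obtain ⟨δ, hδ, hshadow⟩ := h.2 ε hε
  refine ⟨δ, hδ, fun x hx hasym => ?_⟩
  obtain ⟨z, hz, hdist, -, hbot⟩ := hshadow _ (hx.twoSidedPseudoOrbit_forwardExtension hδ)
    hasym.twoSidedAsymptotic_forwardExtension
  refine ⟨z, fun i _ => hz i,
    fun i hi => by simpa only [forwardExtension_of_nonpos hi] using hdist i, hbot.congr' ?_⟩
  filter_upwards [eventually_le_atBot 0] with i hi
  rw [forwardExtension_of_nonpos hi]

def IsAsymptoticShadow (f : X → X) (ε : ℝ) (x z : ℤ → X) : Prop :=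
  FullOrbit f z ∧ (∀ i, dist (z i) (x i) < ε) ∧
    (Tendsto (fun i => dist (f (x i)) (x (i + 1))) atTop (𝓝 0) →
      Tendsto (fun i => dist (z i) (x i)) atTop (𝓝 0)) ∧
    (Tendsto (fun i => dist (f (x i)) (x (i + 1))) atBot (𝓝 0) →
      Tendsto (fun i => dist (z i) (x i)) atBot (𝓝 0))

lemma hasTwoSidedSLimitShadowing_of_exists_isAsymptoticShadow
    (h : ∀ ε > 0, ∃ δ > 0, ∀ x, TwoSidedPseudoOrbit f δ x → ∃ z, IsAsymptoticShadow f ε x z) :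
    HasTwoSidedSLimitShadowing f := by
  refine ⟨fun ε hε => ?_, fun ε hε => ?_⟩ <;> obtain ⟨δ, hδ, hshadow⟩ := h ε hε
  · exact ⟨δ, hδ, fun x hx => (hshadow x hx).imp fun z hz => ⟨hz.1, hz.2.1⟩⟩
  · exact ⟨δ, hδ, fun x hx hasym => (hshadow x hx).imp fun z hz =>
      ⟨hz.1, hz.2.1, hz.2.2.1 hasym.1, hz.2.2.2 hasym.2⟩⟩

end General

lemma add_mul_le_of_two_mul_sub_lt {a : ℕ → ℝ} {t : ℝ} {n : ℕ} (ht : 0 ≤ t)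
    (h : ∀ k < n, 2 * a k - t < a (k + 1)) (h0 : 2 * t ≤ a 0) : a 0 + n * t ≤ a n := by
  induction n with
  | zero => simp
  | succ n ih =>
    have hn := ih fun k hk => h k (by omega)
    have hstep := h n (by omega)
    have : 0 ≤ n * t := mul_nonneg n.cast_nonneg ht
    push_cast
    linarith

namespace ExampleSpace

lemma val_cases (x : ExampleSpace) :
    (x : ℝ) = -1 ∨ (x : ℝ) = -1/2 ∨ (x : ℝ) = 0 ∨ ∃ n : ℕ, (x : ℝ) = (1/2) ^ n := by
  simpa [or_assoc] using x.2

lemma dist_eq (a b : ExampleSpace) : dist a b = |(a : ℝ) - b| := Real.dist_eq _ _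

lemma val_le_one (x : ExampleSpace) : (x : ℝ) ≤ 1 := by
  rcases val_cases x with h | h | h | ⟨n, h⟩ <;> rw [h]
  · norm_num
  · norm_num
  · norm_num
  · exact pow_le_one₀ (by norm_num) (by norm_num)

lemma nonneg_of_neg_half_lt (x : ExampleSpace) (hx : -1/2 < (x : ℝ)) : 0 ≤ (x : ℝ) := by
  rcases val_cases x with h | h | h | ⟨n, h⟩ <;> rw [h] at hx ⊢
  · norm_num at hx
  · norm_num at hx
  · positivity

lemma half_pow_eq_of_abs_sub_lt {m n : ℕ} (h : |(1/2 : ℝ) ^ m - (1/2) ^ n| < (1/2) ^ n / 2) :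
    m = n := by
  obtain ⟨h₁, h₂⟩ := abs_lt.1 h
  by_contra hmn
  rcases lt_or_gt_of_ne hmn with hlt | hlt
  · have : (1/2 : ℝ) ^ n ≤ (1/2) ^ (m + 1) := pow_le_pow_of_le_one (by norm_num) (by norm_num) hlt
    rw [pow_succ] at this
    linarith
  · have : (1/2 : ℝ) ^ m ≤ (1/2) ^ (n + 1) := pow_le_pow_of_le_one (by norm_num) (by norm_num) hlt
    rw [pow_succ] at this
    linarith

lemma eq_of_abs_sub_lt {x y : ExampleSpace} (hx : (x : ℝ) ≠ 0) (h : |(y : ℝ) - x| < |(x : ℝ)| / 2) :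
    y = x := by
  refine Subtype.ext ?_
  rcases val_cases x with hx' | hx' | hx' | ⟨n, hx'⟩ <;> rw [hx'] at h hx ⊢
  · norm_num at h
    obtain ⟨h₁, h₂⟩ := abs_lt.1 h
    obtain hy | hy | hy | ⟨m, hy⟩ := val_cases y <;> rw [hy] at h₁ h₂ ⊢
    · linarith
    · linarith
    · linarith [pow_pos (by norm_num : (0 : ℝ) < 1/2) m]
  · norm_num at h
    obtain ⟨h₁, h₂⟩ := abs_lt.1 h
    obtain hy | hy | hy | ⟨m, hy⟩ := val_cases y <;> rw [hy] at h₁ h₂ ⊢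
    · linarith
    · linarith
    · linarith [pow_pos (by norm_num : (0 : ℝ) < 1/2) m]
  · exact absurd rfl hx
  · rw [abs_of_pos (by positivity : (0 : ℝ) < (1/2) ^ n)] at h
    obtain ⟨h₁, -⟩ := abs_lt.1 h
    obtain hy | hy | hy | ⟨m, hy⟩ := val_cases y <;> rw [hy] at h h₁ ⊢
    · linarith [pow_pos (by norm_num : (0 : ℝ) < 1/2) n]
    · linarith [pow_pos (by norm_num : (0 : ℝ) < 1/2) n]
    · linarith [pow_pos (by norm_num : (0 : ℝ) < 1/2) n]
    · rw [half_pow_eq_of_abs_sub_lt h]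

noncomputable def realMap (x : ℝ) : ℝ :=
  if x = -1 then -1/2
  else if x = -1/2 then 0
  else if x = 0 then 0
  else if x = 1 then 1
  else 2 * x

lemma realMap_neg_one : realMap (-1) = -1/2 := by norm_num [realMap]

lemma realMap_neg_half : realMap (-1/2) = 0 := by norm_num [realMap]

lemma realMap_one : realMap 1 = 1 := by norm_num [realMap]

lemma realMap_eq_two_mul {x : ℝ} (h₀ : 0 ≤ x) (h₁ : x < 1) : realMap x = 2 * x := by
  unfold realMap
  split_ifs <;> linarith

lemma realMap_zero : realMap 0 = 0 := by
  rw [realMap_eq_two_mul le_rfl one_pos, mul_zero]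

lemma realMap_half_pow_succ (n : ℕ) : realMap ((1/2) ^ (n + 1)) = (1/2) ^ n := by
  rw [realMap_eq_two_mul (by positivity) (pow_lt_one₀ (by norm_num) (by norm_num) n.succ_ne_zero),
    pow_succ]
  ring

lemma le_realMap {x : ℝ} (h₀ : 0 ≤ x) (h₁ : x ≤ 1) : x ≤ realMap x := by
  rcases h₁.lt_or_eq with h₁ | rfl
  · rw [realMap_eq_two_mul h₀ h₁]
    linarith
  · rw [realMap_one]

lemma realMap_nonneg (x : ExampleSpace) (hx : (x : ℝ) ≠ -1) : 0 ≤ realMap x := by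
  rcases val_cases x with h | h | h | ⟨n, h⟩
  · exact absurd h hx
  · rw [h, realMap_neg_half]
  · rw [h, realMap_zero]
  · have hx₀ : 0 ≤ (x : ℝ) := by rw [h]; positivity
    exact hx₀.trans (le_realMap hx₀ (val_le_one x))

lemma neg_half_le_realMap (x : ExampleSpace) : -1/2 ≤ realMap x := by
  by_cases hx : (x : ℝ) = -1
  · rw [hx, realMap_neg_one]
  · linarith [realMap_nonneg x hx]

lemma realMap_mem (x : ExampleSpace) :
    realMap x ∈ ({-1, -1/2, 0} : Set ℝ) ∪ {x : ℝ | ∃ n : ℕ, x = (1/2) ^ n} := by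
  rcases val_cases x with h | h | h | ⟨n, h⟩ <;> rw [h]
  · simp [realMap_neg_one]
  · simp [realMap_neg_half]
  · simp [realMap_zero]
  · cases n with
    | zero => exact Or.inr ⟨0, by simp [realMap_one]⟩
    | succ n => exact Or.inr ⟨n, realMap_half_pow_succ n⟩

noncomputable def map (x : ExampleSpace) : ExampleSpace := ⟨realMap x, realMap_mem x⟩

lemma map_val (x : ExampleSpace) : (map x : ℝ) = realMap x := rfl

noncomputable def dyadic (n : ℕ) : ExampleSpace := ⟨(1/2) ^ n, Or.inr ⟨n, rfl⟩⟩

lemma dyadic_val (n : ℕ) : (dyadic n : ℝ) = (1/2) ^ n := rfl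

noncomputable def zero : ExampleSpace := ⟨0, by simp⟩

noncomputable def negOne : ExampleSpace := ⟨-1, by simp⟩

lemma map_dyadic_succ (n : ℕ) : map (dyadic (n + 1)) = dyadic n :=
  Subtype.ext (realMap_half_pow_succ n)

lemma map_zero : map zero = zero := Subtype.ext realMap_zero

lemma iterate_map_dyadic (k n : ℕ) : map^[k] (dyadic (n + k)) = dyadic n := by
  induction k with
  | zero => rfl
  | succ k ih => rw [iterate_succ_apply, ← add_assoc, map_dyadic_succ, ih]

lemma iterate_map_negOne (k : ℕ) : map^[k + 2] negOne = zero := by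
  have h : map^[2] negOne = zero := Subtype.ext <| by
    simp [map_val, negOne, zero, realMap_neg_one, realMap_neg_half]
  rw [iterate_add_apply, h, iterate_fixed map_zero]

lemma continuous_map : Continuous map := by
  rw [Metric.continuous_iff]
  intro b ε hε
  by_cases hb : (b : ℝ) = 0
  · refine ⟨min (1/2) (ε/2), by positivity, fun a ha => ?_⟩
    rw [dist_eq, hb, sub_zero] at ha
    have ha₁ := ha.trans_le (min_le_left _ _)
    have ha₂ := ha.trans_le (min_le_right _ _)
    have ha₀ := nonneg_of_neg_half_lt a (by linarith [neg_abs_le (a : ℝ)])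
    rw [dist_eq, map_val, map_val, hb, realMap_zero, sub_zero,
      realMap_eq_two_mul ha₀ (by linarith [le_abs_self (a : ℝ)]), abs_mul, abs_two]
    linarith
  · refine ⟨|(b : ℝ)| / 2, by positivity, fun a ha => ?_⟩
    rw [eq_of_abs_sub_lt (y := a) hb (by rwa [dist_eq] at ha), dist_self]
    exact hε

lemma not_surjective_map : ¬ Surjective map := fun h => by
  obtain ⟨y, hy⟩ := h negOne
  have := neg_half_le_realMap y
  rw [← map_val, hy] at this
  norm_num [negOne] at this


lemma eq_map_of_dist_lt {t : ℝ} {a b : ExampleSpace} (ha : 0 ≤ (a : ℝ)) (hat : 2 * t ≤ a)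
    (h : dist (map a) b < t) : b = map a := by
  have ht : 0 < t := dist_nonneg.trans_lt h
  have hle : (a : ℝ) ≤ map a := le_realMap ha (val_le_one a)
  rw [dist_comm, dist_eq] at h
  refine eq_of_abs_sub_lt (by linarith) ?_
  rw [abs_of_nonneg (by linarith : (0 : ℝ) ≤ map a)]
  linarith

lemma two_mul_sub_lt_of_dist_lt {t : ℝ} {a b : ExampleSpace} (ha₀ : 0 ≤ (a : ℝ))
    (ha₁ : (a : ℝ) < 1) (h : dist (map a) b < t) : 2 * (a : ℝ) - t < b := by
  rw [dist_eq, map_val, realMap_eq_two_mul ha₀ ha₁] at h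
  linarith [(abs_lt.1 h).2]

section PseudoOrbit

variable {δ : ℝ} {x : ℤ → ExampleSpace}

lemma nonneg_of_twoSidedPseudoOrbit (hδ : δ ≤ 1/4) (hx : TwoSidedPseudoOrbit map δ x) (i : ℤ) :
    0 ≤ (x i : ℝ) := by
  have hlower : ∀ j, realMap (x (j - 1)) - δ < x j := fun j => by
    have h := hx (j - 1)
    rw [sub_add_cancel, dist_eq, map_val] at h
    linarith [(abs_lt.1 h).2]
  have hne : ∀ j, (x j : ℝ) ≠ -1 := fun j h => by
    linarith [hlower j, neg_half_le_realMap (x (j - 1))]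
  exact nonneg_of_neg_half_lt _ (by linarith [hlower i, realMap_nonneg _ (hne (i - 1))])

lemma le_of_twoSidedPseudoOrbit (hx : TwoSidedPseudoOrbit map δ x) (hpos : ∀ i, 0 ≤ (x i : ℝ))
    {i j : ℤ} (hij : i ≤ j) (hi : 2 * δ ≤ x i) : 2 * δ ≤ x j := by
  induction j, hij using Int.leInduction with
  | base => exact hi
  | succ j _ ih =>
    rw [eq_map_of_dist_lt (hpos j) ih (hx j), map_val]
    exact ih.trans (le_realMap (hpos j) (val_le_one _))

/-- Since the map doubles on `[0, 1/4)`, a point of `x` at distance `ε` from `0` would be pushed out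
of `[0, 1/4)` within `2/ε` steps. -/
lemma tendsto_val_zero {l : Filter ℤ} (hl : ∀ k : ℕ, Tendsto (· + (k : ℤ)) l l)
    (hpos : ∀ i, 0 ≤ (x i : ℝ)) (hsmall : ∀ᶠ i in l, (x i : ℝ) < 1/4)
    (hjump : Tendsto (fun i => dist (map (x i)) (x (i + 1))) l (𝓝 0)) :
    Tendsto (fun i => (x i : ℝ)) l (𝓝 0) := by
  refine tendsto_order.2 ⟨fun a ha => .of_forall fun i => ha.trans_le (hpos i), fun ε hε => ?_⟩
  obtain ⟨n, hn⟩ := exists_nat_ge (2 / ε)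
  have hwindow : ∀ᶠ i in l, ∀ k ∈ Finset.range (n + 1),
      (x (i + k) : ℝ) < 1/4 ∧ dist (map (x (i + k))) (x (i + k + 1)) < ε / 2 := by
    rw [eventually_all_finset]
    exact fun k _ => (hl k).eventually (hsmall.and (hjump.eventually (gt_mem_nhds (half_pos hε))))
  filter_upwards [hwindow] with i hi
  by_contra! hεi
  have hgrowth := add_mul_le_of_two_mul_sub_lt (a := fun k => (x (i + k) : ℝ)) (n := n)
    (half_pos hε).le (fun k hk => ?_) (by simp only [Nat.cast_zero, add_zero]; linarith)
  · have hnε : 1 ≤ n * (ε / 2) := by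
      rw [div_le_iff₀ hε] at hn
      linarith
    have hlast := (hi n (by simp)).1
    simp only [Nat.cast_zero, add_zero] at hgrowth
    linarith
  · obtain ⟨hsmall', hjump'⟩ := hi k (by simp; omega)
    simpa [add_assoc] using two_mul_sub_lt_of_dist_lt (hpos _) (by linarith) hjump'

variable {ε : ℝ}

lemma isAsymptoticShadow_zero (hδ : δ ≤ 1/8) (hε : 2 * δ ≤ ε) (hpos : ∀ i, 0 ≤ (x i : ℝ))
    (hsmall : ∀ i, (x i : ℝ) < 2 * δ) : IsAsymptoticShadow map ε x fun _ => zero := by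
  have hdist : ∀ i, dist zero (x i) = x i := fun i => by
    rw [dist_eq, abs_sub_comm, show ((zero : ExampleSpace) : ℝ) = 0 from rfl, sub_zero,
      abs_of_nonneg (hpos i)]
  have hsmall' : ∀ l : Filter ℤ, ∀ᶠ i in l, (x i : ℝ) < 1/4 :=
    fun _ => .of_forall fun i => by linarith [hsmall i]
  simp only [IsAsymptoticShadow, hdist]
  exact ⟨fun _ => map_zero, fun i => (hsmall i).trans_le hε,
    tendsto_val_zero (fun k => tendsto_atTop_add_const_right _ _ tendsto_id) hpos (hsmall' _),
    tendsto_val_zero (fun k => tendsto_atBot_add_const_right _ _ tendsto_id) hpos (hsmall' _)⟩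

lemma isAsymptoticShadow_self (hx : TwoSidedPseudoOrbit map δ x) (hpos : ∀ i, 0 ≤ (x i : ℝ))
    (hε : 0 < ε) (hlarge : ∀ i, 2 * δ ≤ x i) : IsAsymptoticShadow map ε x x := by
  simp only [IsAsymptoticShadow, dist_self]
  exact ⟨fun i => (eq_map_of_dist_lt (hpos i) (hlarge i) (hx i)).symm, fun _ => hε,
    fun _ => tendsto_const_nhds, fun _ => tendsto_const_nhds⟩

/-- At the first time `m` it reaches `2δ`, `x` is at a dyadic point `(1/2)^k`; it is shadowed by the
orbit that agrees with `x` from time `m` on and is at `(1/2)^(k + j)` at time `m - j`. -/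
lemma exists_isAsymptoticShadow_of_first_large (hx : TwoSidedPseudoOrbit map δ x)
    (hpos : ∀ i, 0 ≤ (x i : ℝ)) (hδ : δ ≤ 1/8) (hε : 3 * δ ≤ ε) {m : ℤ} (hm : 2 * δ ≤ x m)
    (hsmall : ∀ i < m, (x i : ℝ) < 2 * δ) : ∃ z, IsAsymptoticShadow map ε x z := by
  have hδ₀ : 0 < δ := dist_nonneg.trans_lt (hx 0)
  have hm_lt : (x m : ℝ) < 5 * δ := by
    have h := hx (m - 1)
    have hprev := hsmall (m - 1) (by omega)
    rw [sub_add_cancel, dist_eq, map_val, realMap_eq_two_mul (hpos _) (by linarith)] at h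
    linarith [(abs_lt.1 h).1]
  obtain ⟨k, hk⟩ : ∃ k, x m = dyadic k := by
    rcases val_cases (x m) with h | h | h | ⟨k, h⟩
    · linarith
    · linarith
    · linarith
    · exact ⟨k, Subtype.ext h⟩
  have hpast : ∀ i < m, ((dyadic (k + (m - i).toNat) : ExampleSpace) : ℝ) ≤ (x m : ℝ) / 2 := by
    intro i hi
    rw [hk, dyadic_val, dyadic_val, show (1/2 : ℝ) ^ k / 2 = (1/2) ^ (k + 1) by ring]
    exact pow_le_pow_of_le_one (by norm_num) (by norm_num) (by omega)
  refine ⟨fun i => if i < m then dyadic (k + (m - i).toNat) else x i, ?_, ?_, ?_, ?_⟩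
  · intro i
    rcases lt_trichotomy (i + 1) m with h | h | h
    · simp only [show i < m by omega, h, if_true]
      rw [show (m - i).toNat = (m - (i + 1)).toNat + 1 by omega, ← add_assoc, map_dyadic_succ]
    · simp only [show i < m by omega, h, lt_irrefl, if_true, if_false]
      rw [show (m - i).toNat = 1 by omega, map_dyadic_succ, hk]
    · simp only [show ¬ i < m by omega, show ¬ i + 1 < m by omega, if_false]
      exact (eq_map_of_dist_lt (hpos i) (le_of_twoSidedPseudoOrbit hx hpos (by omega) hm)
        (hx i)).symm
  · intro i
    dsimp only
    split_ifs with hi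
    · have hz := hpast i hi
      have hz₀ : (0 : ℝ) < (dyadic (k + (m - i).toNat) : ℝ) := pow_pos (by norm_num) _
      rw [dist_eq, abs_lt]
      constructor <;> linarith [hsmall i hi, hpos i]
    · rw [dist_self]
      linarith
  · intro _
    refine tendsto_const_nhds.congr' ?_
    filter_upwards [eventually_ge_atTop m] with i hi
    simp [show ¬ i < m by omega]
  · intro hjump
    have hdyadic : Tendsto (fun i : ℤ => (1/2 : ℝ) ^ (k + (m - i).toNat)) atBot (𝓝 0) :=
      (tendsto_pow_atTop_nhds_zero_of_lt_one (by norm_num) (by norm_num)).comp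
        (tendsto_atTop.2 fun b => (eventually_le_atBot (m - b)).mono fun i hi => by omega)
    have hval := tendsto_val_zero (fun k => tendsto_atBot_add_const_right _ _ tendsto_id) hpos
      ((eventually_lt_atBot m).mono fun i hi => by linarith [hsmall i hi]) hjump
    refine squeeze_zero' (.of_forall fun _ => dist_nonneg) ?_
      (by simpa only [add_zero] using hdyadic.add hval)
    filter_upwards [eventually_lt_atBot m] with i hi
    simp only [hi, if_true, dist_eq, dyadic_val]
    have hz₀ : (0 : ℝ) ≤ (1/2) ^ (k + (m - i).toNat) := by positivity
    rw [abs_le]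
    constructor <;> linarith [hpos i]

lemma exists_isAsymptoticShadow (hδ : δ ≤ 1/8) (hε : 3 * δ ≤ ε)
    (hx : TwoSidedPseudoOrbit map δ x) : ∃ z, IsAsymptoticShadow map ε x z := by
  have hpos := nonneg_of_twoSidedPseudoOrbit (by linarith) hx
  have hδ₀ : 0 < δ := dist_nonneg.trans_lt (hx 0)
  by_cases hlarge : ∃ i, 2 * δ ≤ x i
  · by_cases hsmall : ∃ i, (x i : ℝ) < 2 * δ
    · obtain ⟨j, hj⟩ := hsmall
      have hbdd : ∀ i, 2 * δ ≤ x i → j + 1 ≤ i := fun i hi => by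
        by_contra! h
        exact hj.not_ge (le_of_twoSidedPseudoOrbit hx hpos (by omega) hi)
      obtain ⟨m, hm, hleast⟩ := Int.exists_least_of_bdd ⟨j + 1, hbdd⟩ hlarge
      exact exists_isAsymptoticShadow_of_first_large hx hpos hδ hε hm fun i hi => by
        by_contra! h
        exact hi.not_ge (hleast i h)
    · push Not at hsmall
      exact ⟨x, isAsymptoticShadow_self hx hpos (by linarith) hsmall⟩
  · push Not at hlarge
    exact ⟨_, isAsymptoticShadow_zero hδ (by linarith) hpos hlarge⟩

end PseudoOrbit

lemma hasTwoSidedSLimitShadowing_map : HasTwoSidedSLimitShadowing map :=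
  hasTwoSidedSLimitShadowing_of_exists_isAsymptoticShadow fun ε hε =>
    ⟨min (ε / 3) (1/8), by positivity, fun _ hx =>
      exists_isAsymptoticShadow (min_le_right _ _) (by linarith [min_le_left (ε / 3) (1/8)]) hx⟩

lemma not_hasShadowing_map : ¬ HasShadowing map := by
  intro h
  obtain ⟨δ, hδ, hshadow⟩ := h (1/4) (by norm_num)
  obtain ⟨n, hn⟩ := exists_pow_lt_of_lt_one hδ (by norm_num : (1/2 : ℝ) < 1)
  have hjump : dist (map^[2] negOne) (dyadic n) < δ := by
    rw [iterate_map_negOne 0, dist_eq]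
    simpa [zero, dyadic] using hn
  obtain ⟨z, hz⟩ := hshadow _ (pseudoOrbit_ite_iterate hδ hjump)
  have hz₀ : z = negOne := by
    have h0 := hz 0
    simp only [Nat.ofNat_pos, if_true, iterate_zero_apply, dist_eq] at h0
    exact eq_of_abs_sub_lt (by norm_num [negOne]) (by norm_num [negOne] at h0 ⊢; linarith)
  have hend := hz (n + 2)
  have hclimb := iterate_map_dyadic n 0
  rw [zero_add] at hclimb
  simp only [show ¬ n + 2 < 2 by omega, if_false, Nat.add_sub_cancel, hz₀, iterate_map_negOne,
    hclimb, dist_eq] at hend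
  norm_num [zero, dyadic] at hend

end ExampleSpace

theorem exists_nonsurjective_twoSided_backward_not_sLimit :
    ∃ f : ExampleSpace → ExampleSpace,
      Continuous f ∧ ¬ Function.Surjective f ∧
      (∀ x : ExampleSpace, (f x : ℝ) =
        if (x : ℝ) = -1 then -1/2
        else if (x : ℝ) = -1/2 then 0
        else if (x : ℝ) = 0 then 0
        else if (x : ℝ) = 1 then 1
        else 2 * (x : ℝ)) ∧
      HasTwoSidedSLimitShadowing f ∧ HasBackwardSLimitShadowing f ∧
      ¬ HasSLimitShadowing f :=
  ⟨ExampleSpace.map, ExampleSpace.continuous_map, ExampleSpace.not_surjective_map, fun _ => rfl,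
    ExampleSpace.hasTwoSidedSLimitShadowing_map,
    ExampleSpace.hasTwoSidedSLimitShadowing_map.hasBackwardSLimitShadowing,
    fun h => ExampleSpace.not_hasShadowing_map h.1⟩
end

section
/- Let (X,f) be a dynamical system on a metric space and n∈ℕ. Then f has two-sided n-shadowing if and only if f has two-sided shadowing and is n-expansive. -/
open Filter Topology Function

variable {X : Type*} [MetricSpace X]

def shadowingPoints (f : X → X) (ε : ℝ) (x : ℤ → X) : Set X :=
  {z0 | ∃ z : ℤ → X, FullOrbit f z ∧ z 0 = z0 ∧ ∀ i, dist (z i) (x i) < ε}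

theorem AtMostCard.mono {α : Type*} {S T : Set α} {n : ℕ} (hST : S ⊆ T) (hT : AtMostCard T n) :
    AtMostCard S n :=
  let ⟨F, hF, hTF⟩ := hT
  ⟨F, hF, hST.trans hTF⟩

theorem FullOrbit.twoSidedPseudoOrbit {f : X → X} {z : ℤ → X} (hz : FullOrbit f z) {δ : ℝ}
    (hδ : 0 < δ) : TwoSidedPseudoOrbit f δ z := fun i => by
  rwa [hz i, dist_self]

theorem nExpansive_iff {f : X → X} {n : ℕ} :
    NExpansive f n ↔
      ∃ r > 0, ∀ x : ℤ → X, FullOrbit f x → AtMostCard (shadowingPoints f r x) n := by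
  simp only [NExpansive, shadowingPoints, dist_comm]

theorem shadowingPoints_subset_shadowingPoints_add {f : X → X} {x z : ℤ → X} {ε ε' : ℝ}
    (hzx : ∀ i, dist (z i) (x i) < ε') : shadowingPoints f ε x ⊆ shadowingPoints f (ε + ε') z := by
  rintro w0 ⟨w, hw, rfl, hwx⟩
  refine ⟨w, hw, rfl, fun i => ?_⟩
  calc dist (w i) (z i) ≤ dist (w i) (x i) + dist (z i) (x i) := dist_triangle_right _ _ _
    _ < ε + ε' := add_lt_add (hwx i) (hzx i)

theorem shadowingPoints_mono {f : X → X} {x : ℤ → X} {ε ε' : ℝ} (hεε' : ε ≤ ε') :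
    shadowingPoints f ε x ⊆ shadowingPoints f ε' x :=
  fun _ ⟨z, hz, hz0, hzx⟩ => ⟨z, hz, hz0, fun i => (hzx i).trans_le hεε'⟩

namespace HasTwoSidedNShadowing

variable {f : X → X} {n : ℕ}

theorem hasTwoSidedShadowing (h : HasTwoSidedNShadowing f n) : HasTwoSidedShadowing f := by
  obtain ⟨η, hη, H⟩ := h
  intro ε hε
  obtain ⟨δ, hδ, hsh⟩ := H (min ε (η / 2)) (lt_min hε (half_pos hη))
    ((min_le_right _ _).trans_lt (half_lt_self hη))
  refine ⟨δ, hδ, fun x hx => ?_⟩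
  obtain ⟨z, hz, hzx⟩ := (hsh x hx).1
  exact ⟨z, hz, fun i => (hzx i).trans_le (min_le_left _ _)⟩

theorem nExpansive (h : HasTwoSidedNShadowing f n) : NExpansive f n := by
  obtain ⟨η, hη, H⟩ := h
  obtain ⟨δ, hδ, hsh⟩ := H (η / 2) (half_pos hη) (half_lt_self hη)
  exact nExpansive_iff.2
    ⟨η / 2, half_pos hη, fun x hx => (hsh x (hx.twoSidedPseudoOrbit hδ)).2⟩

end HasTwoSidedNShadowing

/-- Two full orbits `ε`-shadowing the same pseudo-orbit stay `2ε`-close, so for `ε` below half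
the expansivity constant all shadowing points lie in the expansivity class of one of them. -/
theorem HasTwoSidedShadowing.hasTwoSidedNShadowing {f : X → X} {n : ℕ}
    (hshad : HasTwoSidedShadowing f) (hexp : NExpansive f n) : HasTwoSidedNShadowing f n := by
  obtain ⟨r, hr, hexp⟩ := nExpansive_iff.1 hexp
  refine ⟨r / 2, half_pos hr, fun ε hε hεr => ?_⟩
  obtain ⟨δ, hδ, hsh⟩ := hshad ε hε
  refine ⟨δ, hδ, fun x hx => ?_⟩
  obtain ⟨z, hz, hzx⟩ := hsh x hx
  exact ⟨⟨z, hz, hzx⟩, (hexp z hz).mono <|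
    (shadowingPoints_subset_shadowingPoints_add hzx).trans (shadowingPoints_mono (by linarith))⟩

theorem twoSidedNShadowing_iff_twoSidedShadowing_and_nExpansive_general
    {X : Type*} [MetricSpace X] (f : X → X) (n : ℕ) :
    HasTwoSidedNShadowing f n ↔ HasTwoSidedShadowing f ∧ NExpansive f n :=
  ⟨fun h => ⟨h.hasTwoSidedShadowing, h.nExpansive⟩,
    fun ⟨hshad, hexp⟩ => hshad.hasTwoSidedNShadowing hexp⟩

theorem twoSidedNShadowing_iff_twoSidedShadowing_and_nExpansive
    {X : Type*} [MetricSpace X] (f : X → X) (hf : Continuous f) (n : ℕ) (hn : 1 ≤ n) :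
    HasTwoSidedNShadowing f n ↔ HasTwoSidedShadowing f ∧ NExpansive f n :=
  twoSidedNShadowing_iff_twoSidedShadowing_and_nExpansive_general f n
end

section
/- If a compact metric dynamical system (X,f) has unique shadowing, then it has unique s-limit shadowing. -/
/-! The tails of an asymptotic pseudo-orbit `x` are `δ'`-pseudo-orbits for ever smaller `δ'`,
so they are `ε'`-shadowed for ever smaller `ε'`. Every such shadow of the tail from time `n` is
also an `ε`-shadow of it, and so is `f^[n] z` for the `ε`-shadow `z` of `x`; uniqueness at
scale `ε` makes them equal, whence `dist (f^[n] z) (x n) < ε'` for all large `n`. -/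

open Filter Topology Function

variable {X : Type*} [MetricSpace X]

section Shadowing

variable {f : X → X}

theorem PseudoOrbit.shift {δ : ℝ} {x : ℕ → X} (hx : PseudoOrbit f δ x) (n : ℕ) :
    PseudoOrbit f δ (fun i => x (n + i)) :=
  fun i => hx (n + i)

theorem ShadowsFrom.iterate {ε : ℝ} {z : X} {x : ℕ → X} (hz : ShadowsFrom f ε z x) (n : ℕ) :
    ShadowsFrom f ε (f^[n] z) (fun i => x (n + i)) := fun i => by
  simpa only [← iterate_add_apply, Nat.add_comm] using hz (n + i)

theorem ShadowsFrom.mono {ε ε' : ℝ} {z : X} {x : ℕ → X} (hz : ShadowsFrom f ε z x)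
    (hεε' : ε ≤ ε') : ShadowsFrom f ε' z x :=
  fun i => (hz i).trans_le hεε'

theorem AsymptoticPseudoOrbit.eventually_pseudoOrbit_shift {x : ℕ → X}
    (hx : AsymptoticPseudoOrbit f x) {δ : ℝ} (hδ : 0 < δ) :
    ∀ᶠ n in atTop, PseudoOrbit f δ (fun i => x (n + i)) := by
  obtain ⟨N, hN⟩ := (hx.eventually (gt_mem_nhds hδ)).exists_forall_of_atTop
  exact eventually_atTop.2 ⟨N, fun n hn i => hN (n + i) (by omega)⟩

variable {ε δ : ℝ} {x : ℕ → X} {z : X}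

theorem ShadowsFrom.eventually_dist_lt
    (huniq : ∀ y, PseudoOrbit f δ y → {w | ShadowsFrom f ε w y}.Subsingleton)
    (hx : PseudoOrbit f δ x) (hax : AsymptoticPseudoOrbit f x) (hz : ShadowsFrom f ε z x)
    {ε' δ' : ℝ} (hε'ε : ε' ≤ ε) (hδ' : 0 < δ')
    (hexists : ∀ y, PseudoOrbit f δ' y → ∃ w, ShadowsFrom f ε' w y) :
    ∀ᶠ n in atTop, dist (f^[n] z) (x n) < ε' := by
  filter_upwards [hax.eventually_pseudoOrbit_shift hδ'] with n hn
  obtain ⟨w, hw⟩ := hexists _ hn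
  have hw_eq : w = f^[n] z := huniq _ (hx.shift n) (hw.mono hε'ε) (hz.iterate n)
  simpa [hw_eq] using hw 0

theorem ShadowsFrom.tendsto_dist_of_subsingleton
    (huniq : ∀ y, PseudoOrbit f δ y → {w | ShadowsFrom f ε w y}.Subsingleton)
    (hexists : ∀ ε', 0 < ε' → ε' < ε → ∃ δ' > 0,
      ∀ y, PseudoOrbit f δ' y → ∃ w, ShadowsFrom f ε' w y)
    (hx : PseudoOrbit f δ x) (hax : AsymptoticPseudoOrbit f x) (hz : ShadowsFrom f ε z x) :
    Tendsto (fun i => dist (f^[i] z) (x i)) atTop (𝓝 0) := by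
  have hε : 0 < ε := dist_nonneg.trans_lt (hz 0)
  refine tendsto_order.2 ⟨fun a ha => .of_forall fun _ => ha.trans_le dist_nonneg, fun a ha => ?_⟩
  have hε' : 0 < min a ε / 2 := by positivity
  have hε'ε : min a ε / 2 < ε := by linarith [min_le_right a ε]
  obtain ⟨δ', hδ', hshadow⟩ := hexists _ hε' hε'ε
  filter_upwards [hz.eventually_dist_lt huniq hx hax hε'ε.le hδ' hshadow] with n hn
  linarith [min_le_left a ε]

end Shadowing

theorem uniqueShadowing_implies_uniqueSLimitShadowing_general
    {X : Type*} [MetricSpace X] (f : X → X)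
    (h : HasUniqueShadowing f) : HasUniqueSLimitShadowing f := by
  obtain ⟨η, hη, H⟩ := h
  refine ⟨⟨η, hη, H⟩, η, hη, fun ε hε hεη => ?_⟩
  obtain ⟨δ, hδ, Hδ⟩ := H ε hε hεη
  refine ⟨δ, hδ, fun x hx hax => ?_⟩
  obtain ⟨z, hz, hz_unique⟩ := Hδ x hx
  have huniq (y) (hy : PseudoOrbit f δ y) : {w | ShadowsFrom f ε w y}.Subsingleton :=
    fun _ hw _ hw' => (Hδ y hy).unique hw hw'
  have hexists (ε') (hε' : 0 < ε') (hε'ε : ε' < ε) :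
      ∃ δ' > 0, ∀ y, PseudoOrbit f δ' y → ∃ w, ShadowsFrom f ε' w y := by
    obtain ⟨δ', hδ', Hδ'⟩ := H ε' hε' (hε'ε.trans hεη)
    exact ⟨δ', hδ', fun y hy => (Hδ' y hy).exists⟩
  exact ⟨z, ⟨hz, hz.tendsto_dist_of_subsingleton huniq hexists hx hax⟩,
    fun z' hz' => hz_unique z' hz'.1⟩

theorem uniqueShadowing_implies_uniqueSLimitShadowing
    {X : Type*} [MetricSpace X] [CompactSpace X] (f : X → X) (hf : Continuous f)
    (h : HasUniqueShadowing f) : HasUniqueSLimitShadowing f :=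
  uniqueShadowing_implies_uniqueSLimitShadowing_general f h
end
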